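/- Let G be a compact metrizable topological group equipped with a bi-invariant metric. If a Borel probability measure μ on G is adapted and strictly aperiodic, then for every ε > 0 there exists n ∈ ℕ such that the n-fold convolution power μ^{*n} satisfies the 'no deterministic ε-images' condition: there is no pair of closed subsets A, B ⊆ G such that each of A, B, A^c, B^c contains an open ball of radius ε and gA = B for every g ∈ supp(μ^{*n}). -/

import Mathlib

open MeasureTheory Topology Filter Set Pointwise Metric

/-- The (closed) support of a measure: the set of points all of whose open
neighborhoods have positive measure. -/
def msupp {α : Type*} [TopologicalSpace α] [MeasurableSpace α] (μ : Measure α) : Set α :=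
  {x | ∀ U : Set α, IsOpen U → x ∈ U → 0 < μ U}

/-- The `n`-fold convolution power `μ^{*n}` of a measure on a group. -/
noncomputable def convPow {G : Type*} [Group G] [MeasurableSpace G] (μ : Measure G) :
    ℕ → Measure G
  | 0 => Measure.dirac 1
  | n + 1 => μ.mconv (convPow μ n)

lemma msupp_mul_subset {G : Type*} [Group G] [TopologicalSpace G] [IsTopologicalGroup G]
    [MeasurableSpace G] [BorelSpace G] [SecondCountableTopology G]
    (μ ν : Measure G) [SFinite μ] [SFinite ν] :
    msupp μ * msupp ν ⊆ msupp (μ.mconv ν) := by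
  rintro z hz
  rw [Set.mem_mul] at hz
  obtain ⟨x, hx, y, hy, rfl⟩ := hz
  intro U hU hzU
  have hpre : IsOpen ((fun p : G × G => p.1 * p.2) ⁻¹' U) := hU.preimage continuous_mul
  obtain ⟨V, W, hV, hW, hxV, hyW, hVW⟩ := isOpen_prod_iff.1 hpre x y hzU
  have hmap : μ.mconv ν U = (μ.prod ν) ((fun p : G × G => p.1 * p.2) ⁻¹' U) := by
    unfold Measure.mconv
    exact Measure.map_apply measurable_mul hU.measurableSet
  rw [hmap]
  have h1 : (μ.prod ν) (V ×ˢ W) ≤ (μ.prod ν) ((fun p : G × G => p.1 * p.2) ⁻¹' U) :=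
    measure_mono (fun p hp => hVW hp)
  have h2 : (0:ENNReal) < (μ.prod ν) (V ×ˢ W) := by
    rw [Measure.prod_prod]
    exact ENNReal.mul_pos (hx V hV hxV).ne' (hy W hW hyW).ne'
  exact lt_of_lt_of_le h2 h1

lemma isProbabilityMeasure_convPow {G : Type*} [Group G] [MeasurableSpace G] [MeasurableMul₂ G]
    (μ : Measure G) [IsProbabilityMeasure μ] (n : ℕ) : IsProbabilityMeasure (convPow μ n) := by
  induction n with
  | zero => rw [convPow]; infer_instance
  | succ n ih => rw [convPow]; haveI := ih; infer_instance

lemma msupp_nonempty {G : Type*} [TopologicalSpace G] [CompactSpace G] [MeasurableSpace G]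
    (μ : Measure G) [IsProbabilityMeasure μ] : (msupp μ).Nonempty := by
  by_contra h
  rw [Set.not_nonempty_iff_eq_empty] at h
  have hx : ∀ x : G, ∃ U : Set G, IsOpen U ∧ x ∈ U ∧ μ U = 0 := by
    intro x
    have hx' : x ∉ msupp μ := by rw [h]; exact Set.notMem_empty x
    simp only [msupp, Set.mem_setOf_eq, not_forall] at hx'
    obtain ⟨U, hU, hxU, hμ⟩ := hx'
    exact ⟨U, hU, hxU, by simpa using hμ⟩
  choose U hUo hxU hU0 using hx
  obtain ⟨t, ht⟩ := isCompact_univ.elim_finite_subcover U hUo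
    (fun x _ => Set.mem_iUnion.2 ⟨x, hxU x⟩)
  have h0 : μ (⋃ i ∈ t, U i) = 0 :=
    (measure_biUnion_null_iff t.countable_toSet).2 (fun i _ => hU0 i)
  have : μ (Set.univ : Set G) = 0 := measure_mono_null ht h0
  simp [measure_univ] at this

lemma pow_msupp_subset {G : Type*} [Group G] [TopologicalSpace G] [IsTopologicalGroup G]
    [MeasurableSpace G] [BorelSpace G] [SecondCountableTopology G]
    (μ : Measure G) [IsProbabilityMeasure μ] : ∀ n : ℕ, (msupp μ) ^ n ⊆ msupp (convPow μ n) := by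
  intro n
  induction n with
  | zero =>
    rw [pow_zero]
    intro z hz
    rw [Set.mem_one] at hz
    subst hz
    intro U hU h1
    rw [convPow, Measure.dirac_apply' _ hU.measurableSet, Set.indicator_of_mem h1]
    exact zero_lt_one
  | succ n ih =>
    rw [pow_succ', convPow]
    haveI := isProbabilityMeasure_convPow μ n
    exact fun z hz => msupp_mul_subset μ (convPow μ n)
      (Set.mul_subset_mul_left ih hz)

lemma exists_pow_dist_inv {G : Type*} [Group G] [MetricSpace G] [CompactSpace G]
    (hleft : ∀ g x y : G, dist (g * x) (g * y) = dist x y)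
    (hright : ∀ g x y : G, dist (x * g) (y * g) = dist x y)
    (t : G) {ε : ℝ} (hε : 0 < ε) : ∃ k : ℕ, 1 ≤ k ∧ dist (t ^ k) t⁻¹ < ε := by
  obtain ⟨a, -, φ, hφ, hconv⟩ := isCompact_univ.tendsto_subseq
    (x := fun k : ℕ => t ^ (k + 1)) (fun n => Set.mem_univ _)
  rw [Metric.tendsto_atTop] at hconv
  obtain ⟨M, hM⟩ := hconv (ε / 4) (by linarith)
  have h1 := hM M le_rfl
  have h2 := hM (M + 1) (Nat.le_succ M)
  simp only [Function.comp_apply] at h1 h2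
  set i := φ M + 1 with hi
  set j := φ (M + 1) + 1 with hj
  have hij : i < j := by
    have h3 : φ M < φ (M + 1) := hφ (by omega); omega
  have hd : dist (t ^ i) (t ^ j) < ε / 2 := by
    calc dist (t ^ i) (t ^ j) ≤ dist (t ^ i) a + dist (t ^ j) a := dist_triangle_right _ _ _
    _ < ε / 4 + ε / 4 := add_lt_add h1 h2
    _ = ε / 2 := by ring
  set m := j - i with hm'
  have hm : 1 ≤ m := by omega
  have hjim : j = i + m := by omega
  have hdist1 : dist (t ^ m) (1 : G) < ε / 2 := by
    have h := hleft (t ^ i) 1 (t ^ m)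
    rw [mul_one, ← pow_add, ← hjim] at h
    rw [dist_comm, ← h]
    exact hd
  refine ⟨2 * m - 1, by omega, ?_⟩
  have key : dist (t ^ (2 * m - 1)) t⁻¹ = dist (t ^ (2 * m)) 1 := by
    have h := hright t (t ^ (2 * m - 1)) t⁻¹
    rw [inv_mul_cancel, ← pow_succ] at h
    have h2m : 2 * m - 1 + 1 = 2 * m := by omega
    rw [h2m] at h
    exact h.symm
  rw [key]
  have e1 : dist (t ^ (2 * m)) (t ^ m) = dist (t ^ m) 1 := by
    have h := hright (t ^ m) (t ^ m) 1
    rw [one_mul, ← pow_add] at h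
    have : m + m = 2 * m := by omega
    rw [this] at h
    exact h
  calc dist (t ^ (2 * m)) 1 ≤ dist (t ^ (2 * m)) (t ^ m) + dist (t ^ m) 1 := dist_triangle _ _ _
  _ = dist (t ^ m) 1 + dist (t ^ m) 1 := by rw [e1]
  _ < ε / 2 + ε / 2 := add_lt_add hdist1 hdist1
  _ = ε := by ring

/-- **Lemma.** Let `G` be a compact metrizable group with a bi-invariant metric. If a Borel
probability measure `μ` on `G` is adapted (the smallest closed subgroup containing `supp μ`
is `G`) and strictly aperiodic (`supp μ` is not contained in any coset of any proper closed
normal subgroup), then for every `ε > 0` there is `n ≥ 1` such that `μ^{*n}` satisfies the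
no-deterministic-`ε`-images condition: there is no pair of closed sets `A, B ⊆ G`, each of
`A`, `B`, `Aᶜ`, `Bᶜ` containing an open ball of radius `ε`, with `gA = B` for every
`g ∈ supp (μ^{*n})`. -/
theorem adapted_strictlyAperiodic_no_eps_images {G : Type*} [Group G] [MetricSpace G]
    [IsTopologicalGroup G] [CompactSpace G] [MeasurableSpace G] [BorelSpace G]
    (hleft : ∀ g x y : G, dist (g * x) (g * y) = dist x y)
    (hright : ∀ g x y : G, dist (x * g) (y * g) = dist x y)
    (μ : Measure G) [IsProbabilityMeasure μ]
    (hadapted : (Subgroup.closure (msupp μ)).topologicalClosure = ⊤)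
    (hsa : ¬ ∃ (H : Subgroup G) (g : G), H.Normal ∧ IsClosed (H : Set G) ∧ H ≠ ⊤ ∧
      msupp μ ⊆ g • (H : Set G)) :
    ∀ ε : ℝ, 0 < ε → ∃ n : ℕ, 0 < n ∧
      ¬ ∃ A B : Set G, IsClosed A ∧ IsClosed B ∧
        (∃ a, ball a ε ⊆ A) ∧ (∃ b, ball b ε ⊆ B) ∧
        (∃ a', ball a' ε ⊆ Aᶜ) ∧ (∃ b', ball b' ε ⊆ Bᶜ) ∧
        ∀ g ∈ msupp (convPow μ n), g • A = B := by
  intro ε hε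
  classical
  set S : Set G := msupp μ with hS
  obtain ⟨s₀, hs₀⟩ := msupp_nonempty μ
  set D : ℕ → Set G := fun n => (S ^ (n + 1))⁻¹ * S ^ (n + 1) with hD
  set Hn : ℕ → Subgroup G := fun n => Subgroup.closure (D n) with hHn
  -- D is monotone
  have hDsucc : ∀ n, D n ⊆ D (n + 1) := by
    intro n z hz
    rw [hD, Set.mem_mul] at hz ⊢
    obtain ⟨u, hu, v, hv, rfl⟩ := hz
    rw [Set.mem_inv] at hu
    refine ⟨(s₀ * u⁻¹)⁻¹, ?_, s₀ * v, ?_, ?_⟩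
    · rw [Set.mem_inv, inv_inv, pow_succ']
      exact Set.mul_mem_mul hs₀ hu
    · rw [pow_succ']
      exact Set.mul_mem_mul hs₀ hv
    · group
  have hDmono : Monotone D := monotone_nat_of_le_succ hDsucc
  have hHmono : Monotone Hn := fun n m hnm => Subgroup.closure_mono (hDmono hnm)
  set Hinf : Subgroup G := Subgroup.closure (⋃ n, D n) with hHinf
  set K : Subgroup G := Hinf.topologicalClosure with hK
  have hKclosed : IsClosed (K : Set G) := Subgroup.isClosed_topologicalClosure Hinf
  have hKcoe : (K : Set G) = closure (Hinf : Set G) := rfl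
  -- conjugation by s⁻¹ (s ∈ S) preserves Hinf
  have conjH : ∀ s ∈ S, ∀ x ∈ Hinf, s⁻¹ * x * s ∈ Hinf := by
    intro s hs x hx
    induction hx using Subgroup.closure_induction with
    | mem z hz =>
      rw [Set.mem_iUnion] at hz
      obtain ⟨n, hzn⟩ := hz
      rw [hD, Set.mem_mul] at hzn
      obtain ⟨u, hu, v, hv, rfl⟩ := hzn
      rw [Set.mem_inv] at hu
      apply Subgroup.subset_closure
      rw [Set.mem_iUnion]
      refine ⟨n + 1, ?_⟩
      rw [hD, Set.mem_mul]
      refine ⟨(u⁻¹ * s)⁻¹, ?_, v * s, ?_, ?_⟩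
      · rw [Set.mem_inv, inv_inv, pow_succ]
        exact Set.mul_mem_mul hu hs
      · rw [pow_succ]
        exact Set.mul_mem_mul hv hs
      · group
    | one => simpa using Subgroup.one_mem Hinf
    | mul y z hy hz hy' hz' =>
      have : s⁻¹ * (y * z) * s = (s⁻¹ * y * s) * (s⁻¹ * z * s) := by group
      rw [this]
      exact Subgroup.mul_mem _ hy' hz'
    | inv y hy hy' =>
      have : s⁻¹ * y⁻¹ * s = (s⁻¹ * y * s)⁻¹ := by group
      rw [this]
      exact Subgroup.inv_mem _ hy'
  -- conjugation by s⁻¹ preserves K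
  have conjK_inv : ∀ s ∈ S, ∀ x ∈ K, s⁻¹ * x * s ∈ K := by
    intro s hs x hx
    have hc : Continuous fun y : G => s⁻¹ * y * s :=
      (continuous_const.mul continuous_id).mul continuous_const
    have hmapsto : Set.MapsTo (fun y : G => s⁻¹ * y * s) (Hinf : Set G) (K : Set G) :=
      fun y hy => Subgroup.le_topologicalClosure Hinf (conjH s hs y hy)
    have hxc : x ∈ closure (Hinf : Set G) := hx
    have hres := map_mem_closure hc hxc hmapsto
    rwa [hKclosed.closure_eq] at hres
  -- iterated
  have conjK_inv_pow : ∀ s ∈ S, ∀ k : ℕ, ∀ x ∈ K, (s⁻¹) ^ k * x * s ^ k ∈ K := by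
    intro s hs k
    induction k with
    | zero => intro x hx; simpa using hx
    | succ k ih =>
      intro x hx
      have h1 : (s⁻¹) ^ (k + 1) * x * s ^ (k + 1) = s⁻¹ * ((s⁻¹) ^ k * x * s ^ k) * s := by
        rw [pow_succ', pow_succ]; group
      rw [h1]
      exact conjK_inv s hs _ (ih x hx)
  -- conjugation by s preserves K (compactness trick)
  have conjK : ∀ s ∈ S, ∀ x ∈ K, s * x * s⁻¹ ∈ K := by
    intro s hs x hx
    have hsel : ∀ i : ℕ, ∃ k : ℕ, 1 ≤ k ∧ dist ((s⁻¹) ^ k) s < 1 / (i + 1) := by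
      intro i
      have : (0:ℝ) < 1 / (i + 1) := by positivity
      obtain ⟨k, hk1, hk2⟩ := exists_pow_dist_inv hleft hright s⁻¹ this
      rw [inv_inv] at hk2
      exact ⟨k, hk1, hk2⟩
    choose k hk1 hk2 using hsel
    set u : ℕ → G := fun i => (s⁻¹) ^ (k i) with hu
    have hulim : Tendsto u atTop (𝓝 s) := by
      rw [tendsto_iff_dist_tendsto_zero]
      apply squeeze_zero (fun i => dist_nonneg) (fun i => (hk2 i).le)
      exact tendsto_one_div_add_atTop_nhds_zero_nat
    have hmem : ∀ i, u i * x * (u i)⁻¹ ∈ K := by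
      intro i
      have : (u i)⁻¹ = s ^ (k i) := by rw [hu]; simp
      rw [this]
      exact conjK_inv_pow s hs (k i) x hx
    have hlim : Tendsto (fun i => u i * x * (u i)⁻¹) atTop (𝓝 (s * x * s⁻¹)) :=
      ((hulim.mul tendsto_const_nhds).mul hulim.inv)
    exact hKclosed.mem_of_tendsto hlim (Filter.Eventually.of_forall hmem)
  -- conjugation by elements of closure S
  have conjGen : ∀ g ∈ Subgroup.closure S,
      (∀ x ∈ K, g * x * g⁻¹ ∈ K) ∧ (∀ x ∈ K, g⁻¹ * x * g ∈ K) := by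
    intro g hg
    induction hg using Subgroup.closure_induction with
    | mem s hs =>
      constructor
      · exact fun x hx => conjK s hs x hx
      · exact fun x hx => conjK_inv s hs x hx
    | one => constructor <;> · intro x hx; simpa using hx
    | mul y z hy hz hy' hz' =>
      constructor
      · intro x hx
        have : (y * z) * x * (y * z)⁻¹ = y * (z * x * z⁻¹) * y⁻¹ := by group
        rw [this]
        exact hy'.1 _ (hz'.1 x hx)
      · intro x hx
        have : (y * z)⁻¹ * x * (y * z) = z⁻¹ * (y⁻¹ * x * y) * z := by group
        rw [this]
        exact hz'.2 _ (hy'.2 x hx)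
    | inv y hy hy' =>
      constructor
      · intro x hx
        have : y⁻¹ * x * y⁻¹⁻¹ = y⁻¹ * x * y := by rw [inv_inv]
        rw [this]
        exact hy'.2 x hx
      · intro x hx
        have : y⁻¹⁻¹ * x * y⁻¹ = y * x * y⁻¹ := by rw [inv_inv]
        rw [this]
        exact hy'.1 x hx
  -- conjugation by every g ∈ G
  have conjG : ∀ g : G, ∀ x ∈ K, g * x * g⁻¹ ∈ K := by
    intro g x hx
    have hgcl : g ∈ closure ((Subgroup.closure S : Subgroup G) : Set G) := by
      have : g ∈ (Subgroup.closure S).topologicalClosure := by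
        rw [hadapted]; trivial
      exact this
    have hc : Continuous fun y : G => y * x * y⁻¹ :=
      (continuous_id.mul continuous_const).mul continuous_inv
    have hmapsto : Set.MapsTo (fun y : G => y * x * y⁻¹)
        ((Subgroup.closure S : Subgroup G) : Set G) (K : Set G) :=
      fun y hy => (conjGen y hy).1 x hx
    have := map_mem_closure hc hgcl hmapsto
    rwa [hKclosed.closure_eq] at this
  have hKnormal : K.Normal := ⟨fun x hx g => conjG g x hx⟩
  -- Strict aperiodicity forces K = ⊤
  have hKtop : K = ⊤ := by
    by_contra hne
    apply hsa
    refine ⟨K, s₀, hKnormal, hKclosed, hne, ?_⟩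
    intro t ht
    rw [Set.mem_smul_set_iff_inv_smul_mem, smul_eq_mul]
    apply Subgroup.le_topologicalClosure Hinf
    apply Subgroup.subset_closure
    rw [Set.mem_iUnion]
    refine ⟨0, ?_⟩
    rw [hD, Set.mem_mul]
    exact ⟨s₀⁻¹, by rw [Set.mem_inv, inv_inv, pow_one]; exact hs₀,
      t, by rw [pow_one]; exact ht, rfl⟩
  -- density of ⋃ Hn
  have hHinfSup : Hinf = ⨆ n, Hn n := by
    rw [hHinf, Subgroup.closure_iUnion]
  have hUnionEq : (Hinf : Set G) = ⋃ n, (Hn n : Set G) := by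
    rw [hHinfSup]
    exact Subgroup.coe_iSup_of_directed hHmono.directed_le
  have hdense : Dense (Hinf : Set G) := by
    rw [dense_iff_closure_eq, ← hKcoe, hKtop]
    rfl
  -- ε-density of a single Hn via compactness
  set V : ℕ → Set G := fun n => ⋃ h ∈ (Hn n : Set G), ball h ε with hV
  have hVopen : ∀ n, IsOpen (V n) := fun n => isOpen_biUnion (fun _ _ => isOpen_ball)
  have hVcover : (Set.univ : Set G) ⊆ ⋃ n, V n := by
    intro x _
    obtain ⟨y, hyb, hy⟩ := Metric.dense_iff.1 hdense x ε hε
    rw [hUnionEq, Set.mem_iUnion] at hy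
    obtain ⟨n, hyn⟩ := hy
    rw [Set.mem_iUnion]
    refine ⟨n, ?_⟩
    rw [hV, Set.mem_iUnion₂]
    exact ⟨y, hyn, by rwa [mem_ball, dist_comm, ← mem_ball]⟩
  obtain ⟨t, ht⟩ := isCompact_univ.elim_finite_subcover V hVopen hVcover
  set N : ℕ := t.sup id with hN
  have hVmono : Monotone V := by
    intro n m hnm x hx
    rw [hV, Set.mem_iUnion₂] at hx ⊢
    obtain ⟨h, hh, hx⟩ := hx
    exact ⟨h, hHmono hnm hh, hx⟩
  have hVN : (Set.univ : Set G) ⊆ V N := by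
    intro x hx
    obtain ⟨n, hnt, hxn⟩ := Set.mem_iUnion₂.1 (ht hx)
    exact hVmono (Finset.le_sup (f := id) hnt) hxn
  -- conclusion
  refine ⟨N + 1, Nat.succ_pos N, ?_⟩
  rintro ⟨A, B, hA, hB, ⟨a, ha⟩, ⟨b, hb⟩, ⟨a', ha'⟩, ⟨b', hb'⟩, hAB⟩
  have hSn : S ^ (N + 1) ⊆ msupp (convPow μ (N + 1)) := pow_msupp_subset μ (N + 1)
  have hstab : (Hn N : Subgroup G) ≤ MulAction.stabilizer G A := by
    rw [hHn]
    apply Subgroup.closure_le _ |>.2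
    intro z hz
    rw [hD, Set.mem_mul] at hz
    obtain ⟨u, hu, v, hv, rfl⟩ := hz
    rw [Set.mem_inv] at hu
    rw [SetLike.mem_coe, MulAction.mem_stabilizer_iff]
    have hp : u⁻¹ • A = B := hAB u⁻¹ (hSn hu)
    have hq : v • A = B := hAB v (hSn hv)
    rw [mul_smul, hq, ← hp, smul_inv_smul]
  have hxV : a' * a⁻¹ ∈ V N := hVN (Set.mem_univ _)
  rw [hV, Set.mem_iUnion₂] at hxV
  obtain ⟨h, hh, hball⟩ := hxV
  have haA : a ∈ A := ha (mem_ball_self hε)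
  have h1 : h * a ∈ A := by
    have hhA : h • A = A := hstab hh
    rw [← hhA]
    exact ⟨a, haA, rfl⟩
  have h2 : h * a ∈ ball a' ε := by
    rw [mem_ball]
    have hr := hright a h (a' * a⁻¹)
    rw [inv_mul_cancel_right] at hr
    rw [hr, dist_comm]
    rw [mem_ball] at hball
    exact hball
  exact ha' h2 h1
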